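/- Two univariate logistic sigmoid functions σ_1(x) = 1/(1 + exp(-α₁x - β₁)) and σ_2(x) = 1/(1 + exp(-α₂x - β₂)) with α₁, α₂ > 0 and (α₁, β₁) ≠ (α₂, β₂) are linearly independent as functions ℝ → ℝ. -/
import Mathlib

theorem sigmoid_linearIndependent (α₁ α₂ β₁ β₂ : ℝ) (hα₁ : 0 < α₁) (hα₂ : 0 < α₂)
    (hne : (α₁, β₁) ≠ (α₂, β₂)) (c₁ c₂ : ℝ)
    (h : ∀ x : ℝ, c₁ * (1 / (1 + Real.exp (-α₁ * x - β₁))) +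
      c₂ * (1 / (1 + Real.exp (-α₂ * x - β₂))) = 0) :
    c₁ = 0 ∧ c₂ = 0 := by
  have key : ∀ x : ℝ, c₁ * (1 + Real.exp (-α₂ * x - β₂)) +
      c₂ * (1 + Real.exp (-α₁ * x - β₁)) = 0 := by
    intro x
    have h1 : (0:ℝ) < 1 + Real.exp (-α₁ * x - β₁) := by positivity
    have h2 : (0:ℝ) < 1 + Real.exp (-α₂ * x - β₂) := by positivity
    have hx := h x
    have e : c₁ * (1 + Real.exp (-α₂ * x - β₂)) + c₂ * (1 + Real.exp (-α₁ * x - β₁)) =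
        (c₁ * (1 / (1 + Real.exp (-α₁ * x - β₁))) +
          c₂ * (1 / (1 + Real.exp (-α₂ * x - β₂)))) *
        ((1 + Real.exp (-α₁ * x - β₁)) * (1 + Real.exp (-α₂ * x - β₂))) := by
      field_simp
    rw [e, hx, zero_mul]
  set a := Real.exp (-β₁) with ha
  set b := Real.exp (-β₂) with hb
  set r := Real.exp (-α₁) with hr
  set s := Real.exp (-α₂) with hs
  have ha0 : 0 < a := Real.exp_pos _
  have hb0 : 0 < b := Real.exp_pos _
  have hr0 : 0 < r := Real.exp_pos _
  have hs0 : 0 < s := Real.exp_pos _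
  have hr1 : r < 1 := by rw [hr]; exact Real.exp_lt_one_iff.mpr (by linarith)
  have hs1 : s < 1 := by rw [hs]; exact Real.exp_lt_one_iff.mpr (by linarith)
  have e0 := key 0
  have e1 := key 1
  have e2 := key 2
  have exp1 : ∀ α β : ℝ, Real.exp (-α * 1 - β) = Real.exp (-α) * Real.exp (-β) := by
    intro α β; rw [← Real.exp_add]; ring_nf
  have exp2 : ∀ α β : ℝ, Real.exp (-α * 2 - β) = Real.exp (-α) * Real.exp (-α) * Real.exp (-β) := by
    intro α β; rw [← Real.exp_add, ← Real.exp_add]; ring_nf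
  have exp0 : ∀ α β : ℝ, Real.exp (-α * 0 - β) = Real.exp (-β) := by
    intro α β; ring_nf
  rw [exp0, exp0] at e0
  rw [exp1, exp1] at e1
  rw [exp2, exp2] at e2
  rw [← hr, ← hs] at e1 e2
  -- e0 : c₁ * (1 + b) + c₂ * (1 + a) = 0
  -- e1 : c₁ * (1 + s * b) + c₂ * (1 + r * a) = 0
  -- e2 : c₁ * (1 + s * s * b) + c₂ * (1 + r * r * a) = 0
  by_cases hαeq : α₁ = α₂
  · -- then β₁ ≠ β₂, r = s, a ≠ b
    have hβ : β₁ ≠ β₂ := by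
      intro hβ; exact hne (by rw [hαeq, hβ])
    have hrs : r = s := by rw [hr, hs, hαeq]
    have hab : a ≠ b := by
      intro hab
      exact hβ (by have := Real.exp_injective (ha ▸ hb ▸ hab); linarith)
    rw [← hrs] at e1
    -- e1 - e0 : (c₁ b + c₂ a)(r - 1) = 0
    have k1 : (c₁ * b + c₂ * a) * (r - 1) = 0 := by linear_combination e1 - e0
    have k2 : c₁ * b + c₂ * a = 0 := by
      rcases mul_eq_zero.mp k1 with h' | h'
      · exact h'
      · linarith
    have k3 : c₁ + c₂ = 0 := by linear_combination e0 - k2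
    have k4 : c₁ * (b - a) = 0 := by linear_combination k2 - a * k3
    have hc1 : c₁ = 0 := by
      rcases mul_eq_zero.mp k4 with h' | h'
      · exact h'
      · exact absurd (by linarith : a = b) hab
    exact ⟨hc1, by linarith⟩
  · have hrs : r ≠ s := by
      intro hrs
      exact hαeq (by have := Real.exp_injective (hr ▸ hs ▸ hrs); linarith)
    -- d1 = e1 - e0 : c₁ b (s-1) + c₂ a (r-1) = 0
    have d1 : c₁ * b * (s - 1) + c₂ * a * (r - 1) = 0 := by linear_combination e1 - e0
    have d2 : c₁ * b * s * (s - 1) + c₂ * a * r * (r - 1) = 0 := by linear_combination e2 - e1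
    -- r * d1 - d2 : c₁ b (s-1)(r-s) = 0
    have k1 : c₁ * b * (s - 1) * (r - s) = 0 := by linear_combination r * d1 - d2
    have hc1 : c₁ = 0 := by
      rcases mul_eq_zero.mp k1 with h' | h'
      · rcases mul_eq_zero.mp h' with h'' | h''
        · rcases mul_eq_zero.mp h'' with h3 | h3
          · exact h3
          · linarith
        · linarith
      · exact absurd (by linarith : r = s) hrs
    have hc2 : c₂ = 0 := by
      have : c₂ * a * (r - 1) = 0 := by linear_combination d1 - b * (s - 1) * hc1
      rcases mul_eq_zero.mp this with h' | h'
      · rcases mul_eq_zero.mp h' with h'' | h''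
        · exact h''
        · linarith
      · linarith
    exact ⟨hc1, hc2⟩
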